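/- For every natural number M there exists a finite simple graph G with S_b(G) − φ(G) > M, where φ(G) is the b-chromatic number; in fact, the complete bipartite graph K_{n,n} satisfies φ(K_{n,n}) = 2 and S_b(K_{n,n}) = n + 1 for every n ≥ 1, so the difference S_b(G) − φ(G) is unbounded. -/

import Mathlib

/-!
Definitions for star colorings, star recoloring steps, the strict partial order `≺ₛ`,
star b-vertices, the star (b-)chromatic number, star degrees and related notions,
following Božović, Mesarič Štesl, Peterin,
"On star b-chromatic number of a graph".
-/

variable {V : Type*}

/-- A proper coloring which is a *star coloring*: no path on four vertices
(vertices `a-b-x-y` with the three edges `ab`, `bx`, `xy`) is bicolored,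
i.e. the union of any two color classes induces a star forest. -/
def IsStarColoring (G : SimpleGraph V) (c : V → ℕ) : Prop :=
  (∀ ⦃u w⦄, G.Adj u w → c u ≠ c w) ∧
  ∀ a b x y : V, G.Adj a b → G.Adj b x → G.Adj x y →
    a ≠ x → b ≠ y → a ≠ y → ¬(c a = c x ∧ c b = c y)

/-- The set of colors used by a coloring. -/
def colorsUsed [Fintype V] (c : V → ℕ) : Finset ℕ :=
  Finset.image c Finset.univ

/-- `c'` is obtained from `c` by a *star recoloring step*: some color class `Vᵢ`
of the star coloring `c` is completely recolored, each of its vertices receiving one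
of the remaining colors of `c`, so that the result `c'` is again a star coloring
(using the colors of `c` minus `i`). We write `c' ⊲ₛ c`. -/
def StarRecolorStep [Fintype V] (G : SimpleGraph V) (c' c : V → ℕ) : Prop :=
  IsStarColoring G c ∧ IsStarColoring G c' ∧
  ∃ i ∈ colorsUsed c,
    (∀ v, c v ≠ i → c' v = c v) ∧
    ∀ v, c v = i → c' v ≠ i ∧ c' v ∈ colorsUsed c

/-- A minimal element of the strict partial order `≺ₛ` (the transitive closure of
the star recoloring step relation `⊲ₛ`): a star coloring on which no star
recoloring step can be performed. -/
def IsStarBColoring [Fintype V] (G : SimpleGraph V) (c : V → ℕ) : Prop :=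
  IsStarColoring G c ∧ ∀ c', ¬ StarRecolorStep G c' c

/-- The *star b-chromatic number* `Sᵦ(G)`: the maximum number of colors used by a
minimal element of `≺ₛ`. -/
noncomputable def starBChromaticNumber [Fintype V] (G : SimpleGraph V) : ℕ :=
  sSup {n | ∃ c : V → ℕ, IsStarBColoring G c ∧ (colorsUsed c).card = n}

/-- The *star chromatic number* `S(G)`: the minimum number of colors in a star coloring. -/
noncomputable def starChromaticNumber [Fintype V] (G : SimpleGraph V) : ℕ :=
  sInf {n | ∃ c : V → ℕ, IsStarColoring G c ∧ (colorsUsed c).card = n}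

/-- A color `j` is *blocked* for the vertex `v` under the star coloring `c`
if `j` is the color of `v` itself, or recoloring `v` alone with `j` destroys
the star coloring property. -/
def ColorBlockedFor [DecidableEq V] (G : SimpleGraph V) (c : V → ℕ) (v : V) (j : ℕ) : Prop :=
  j = c v ∨ ¬ IsStarColoring G (Function.update c v j)

/-- A color of `c` which is not blocked for `v` is *available* for `v`. -/
def ColorAvailableFor [Fintype V] [DecidableEq V] (G : SimpleGraph V) (c : V → ℕ)
    (v : V) (j : ℕ) : Prop :=
  j ∈ colorsUsed c ∧ ¬ ColorBlockedFor G c v j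

/-- `u-b-x-w` is an induced path on four vertices of `G`. -/
def IsInducedP4 (G : SimpleGraph V) (u b x w : V) : Prop :=
  G.Adj u b ∧ G.Adj b x ∧ G.Adj x w ∧
  ¬ G.Adj u x ∧ ¬ G.Adj b w ∧ ¬ G.Adj u w ∧
  u ≠ x ∧ b ≠ w ∧ u ≠ w

/-- The relation `~ᵢ` on a color class: two vertices of the same color joined
by an induced path on four vertices. -/
def P4Rel (G : SimpleGraph V) (c : V → ℕ) (u w : V) : Prop :=
  c u = c w ∧ ∃ b x, IsInducedP4 G u b x w

/-- The `P₄`-system of `v`: its equivalence class under the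
reflexive-transitive closure of `~ᵢ`. -/
def P4System (G : SimpleGraph V) (c : V → ℕ) (v : V) : Set V :=
  {u | Relation.ReflTransGen (P4Rel G c) v u}

/-- An available color `j` for `v` is *blocked for the `P₄`-system of `v`* if every
recoloring of the color class of `v` (each vertex receiving an available color)
in which `v` is recolored by `j` yields a bicolored path on four vertices between
two vertices of the `P₄`-system of `v`. -/
def BlockedForP4System [Fintype V] [DecidableEq V] (G : SimpleGraph V) (c : V → ℕ)
    (v : V) (j : ℕ) : Prop :=
  ∀ c' : V → ℕ,
    (∀ u, c u ≠ c v → c' u = c u) →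
    (∀ u, c u = c v → ColorAvailableFor G c u (c' u)) →
    c' v = j →
    ∃ u w b x, u ∈ P4System G c v ∧ w ∈ P4System G c v ∧
      G.Adj u b ∧ G.Adj b x ∧ G.Adj x w ∧ u ≠ x ∧ b ≠ w ∧ u ≠ w ∧
      c' u = c' x ∧ c' b = c' w

/-- A *star b-vertex*: every available color for `v` is blocked for its `P₄`-system. -/
def IsStarBVertex [Fintype V] [DecidableEq V] (G : SimpleGraph V) (c : V → ℕ) (v : V) : Prop :=
  ∀ j, ColorAvailableFor G c v j → BlockedForP4System G c v j

/-- The *star degree* `dˢ_G(v)` of a vertex: the maximum number of colors blocked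
for `v` over all star colorings of `G`. -/
noncomputable def starDegree [Fintype V] [DecidableEq V] (G : SimpleGraph V) (v : V) : ℕ :=
  sSup {n | ∃ c : V → ℕ, IsStarColoring G c ∧
    {j | j ∈ colorsUsed c ∧ ColorBlockedFor G c v j}.ncard = n}

/-- The `mₛ`-degree of a graph: the largest `k` such that `G` has `k` vertices
of star degree at least `k - 1` (equivalently, with the vertices ordered by
non-increasing star degree, `mₛ(G) = max {i : i - 1 ≤ dˢ_G(vᵢ)}`). -/
noncomputable def msDegree [Fintype V] [DecidableEq V] (G : SimpleGraph V) : ℕ :=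
  sSup {k | ∃ s : Finset V, s.card = k ∧ ∀ v ∈ s, k - 1 ≤ starDegree G v}

/-- The maximum degree `Δ(G)` of a graph. -/
noncomputable def maxDeg (G : SimpleGraph V) : ℕ :=
  sSup {d | ∃ v : V, (G.neighborSet v).ncard = d}

/-- The *b-chromatic number* `φ(G)`: the maximum number of colors of a proper coloring
in which every color class contains a vertex whose closed neighborhood contains
all the colors. -/
noncomputable def bChromaticNumber [Fintype V] (G : SimpleGraph V) : ℕ :=
  sSup {k | ∃ c : V → ℕ, (∀ ⦃u w⦄, G.Adj u w → c u ≠ c w) ∧ (colorsUsed c).card = k ∧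
    ∀ i ∈ colorsUsed c, ∃ v, c v = i ∧
      ∀ j ∈ colorsUsed c, ∃ u, (u = v ∨ G.Adj v u) ∧ c u = j}

/-- The join `G ∨ H` of two simple graphs: disjoint union of `G` and `H`
together with all edges between the two vertex sets. -/
def graphJoin {α β : Type*} (G : SimpleGraph α) (H : SimpleGraph β) :
    SimpleGraph (α ⊕ β) where
  Adj x y :=
    (∃ a b, x = Sum.inl a ∧ y = Sum.inl b ∧ G.Adj a b) ∨
    (∃ a b, x = Sum.inr a ∧ y = Sum.inr b ∧ H.Adj a b) ∨
    (∃ a b, x = Sum.inl a ∧ y = Sum.inr b) ∨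
    (∃ a b, x = Sum.inr a ∧ y = Sum.inl b)
  symm := by
    constructor
    rintro x y (⟨a,b,rfl,rfl,h⟩|⟨a,b,rfl,rfl,h⟩|⟨a,b,rfl,rfl⟩|⟨a,b,rfl,rfl⟩)
    · exact Or.inl ⟨b, a, rfl, rfl, h.symm⟩
    · exact Or.inr (Or.inl ⟨b, a, rfl, rfl, h.symm⟩)
    · exact Or.inr (Or.inr (Or.inr ⟨b, a, rfl, rfl⟩))
    · exact Or.inr (Or.inr (Or.inl ⟨b, a, rfl, rfl⟩))
  loopless := by
    constructor
    rintro x (⟨a,b,h1,h2,h⟩|⟨a,b,h1,h2,h⟩|⟨a,b,h1,h2⟩|⟨a,b,h1,h2⟩) <;> subst h1 <;>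
      simp_all [SimpleGraph.irrefl]

/-- `N₂(v)`: vertices at distance exactly two from `v`. -/
def distTwoSet (G : SimpleGraph V) (v : V) : Set V := {u | G.dist v u = 2}

/-- `N₃(v)`: vertices at distance exactly three from `v`. -/
def distThreeSet (G : SimpleGraph V) (v : V) : Set V := {u | G.dist v u = 3}

/-- `X(v)`: vertices at distance two from `v` with no neighbor at distance three from `v`. -/
def XSet (G : SimpleGraph V) (v : V) : Set V :=
  {u | u ∈ distTwoSet G v ∧ ∀ w ∈ distThreeSet G v, ¬ G.Adj u w}

/-- `Y(v)`: vertices at distance two from `v` having a neighbor at distance three from `v`. -/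
def YSet (G : SimpleGraph V) (v : V) : Set V := distTwoSet G v \ XSet G v

/-!
A star coloring of `K_{α,β}` is a proper coloring that is injective on one of the two sides:
otherwise two repeated colors, one on each side, give a bicolored `P₄`. If one side is rainbow,
any two color classes on the other side can be merged by a star recoloring step, so in a minimal
star coloring that other side is monochromatic; this bounds `Sᵦ(K_{n,n})` by `n + 1`, and the
coloring with one side rainbow and the other side in a single new color is minimal. In a
b-coloring of `K_{α,β}` each side is monochromatic, because a b-vertex of a color on one side lies
on that side and sees only the colors of the other side; hence `φ(K_{n,n}) = 2`.
-/

open Function Sum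

section Invariance

variable {V W : Type*} {G : SimpleGraph V} {H : SimpleGraph W}

theorem IsStarColoring.comp_iso (f : G ≃g H) {c : W → ℕ} (hc : IsStarColoring H c) :
    IsStarColoring G (c ∘ f) := by
  refine ⟨fun u w h => hc.1 (f.map_adj_iff.2 h), fun a b x y hab hbx hxy hax hby hay => ?_⟩
  exact hc.2 _ _ _ _ (f.map_adj_iff.2 hab) (f.map_adj_iff.2 hbx) (f.map_adj_iff.2 hxy)
    (f.injective.ne hax) (f.injective.ne hby) (f.injective.ne hay)

variable [Fintype V]

theorem mem_colorsUsed {c : V → ℕ} {j : ℕ} : j ∈ colorsUsed c ↔ ∃ v, c v = j := by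
  simp [colorsUsed]

def IsBColoring (G : SimpleGraph V) (c : V → ℕ) : Prop :=
  (∀ ⦃u w⦄, G.Adj u w → c u ≠ c w) ∧
    ∀ i ∈ colorsUsed c, ∃ v, c v = i ∧ ∀ j ∈ colorsUsed c, ∃ u, (u = v ∨ G.Adj v u) ∧ c u = j

theorem bChromaticNumber_eq_sSup (G : SimpleGraph V) :
    bChromaticNumber G = sSup {k | ∃ c : V → ℕ, IsBColoring G c ∧ (colorsUsed c).card = k} := by
  unfold bChromaticNumber IsBColoring
  congr 1
  ext k
  exact exists_congr fun c => by tauto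

variable [Fintype W]

theorem colorsUsed_comp_of_surjective {f : V → W} (hf : Surjective f) (c : W → ℕ) :
    colorsUsed (c ∘ f) = colorsUsed c := by
  ext j
  simp only [mem_colorsUsed, comp_apply]
  refine ⟨fun ⟨v, hv⟩ => ⟨f v, hv⟩, fun ⟨w, hw⟩ => ?_⟩
  obtain ⟨v, rfl⟩ := hf w
  exact ⟨v, hw⟩

theorem StarRecolorStep.comp_iso (f : G ≃g H) {c' c : W → ℕ} (h : StarRecolorStep H c' c) :
    StarRecolorStep G (c' ∘ f) (c ∘ f) := by
  obtain ⟨hc, hc', i, hi, hkeep, hmove⟩ := h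
  refine ⟨hc.comp_iso f, hc'.comp_iso f, i, ?_, fun v => hkeep (f v), fun v hv => ?_⟩
  · rwa [colorsUsed_comp_of_surjective f.surjective]
  · rw [colorsUsed_comp_of_surjective f.surjective]
    exact hmove (f v) hv

theorem IsStarBColoring.comp_iso (f : G ≃g H) {c : W → ℕ} (hc : IsStarBColoring H c) :
    IsStarBColoring G (c ∘ f) := by
  refine ⟨hc.1.comp_iso f, fun c' hstep => hc.2 (c' ∘ f.symm) ?_⟩
  simpa [comp_assoc] using hstep.comp_iso f.symm

theorem starBChromaticNumber_congr (f : G ≃g H) :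
    starBChromaticNumber G = starBChromaticNumber H := by
  unfold starBChromaticNumber
  congr 1
  ext k
  constructor
  · rintro ⟨c, hc, rfl⟩
    exact ⟨c ∘ f.symm, hc.comp_iso f.symm,
      congrArg Finset.card (colorsUsed_comp_of_surjective f.symm.surjective c)⟩
  · rintro ⟨c, hc, rfl⟩
    exact ⟨c ∘ f, hc.comp_iso f,
      congrArg Finset.card (colorsUsed_comp_of_surjective f.surjective c)⟩

theorem IsBColoring.comp_iso (f : G ≃g H) {c : W → ℕ} (hc : IsBColoring H c) :
    IsBColoring G (c ∘ f) := by
  refine ⟨fun u w h => hc.1 (f.map_adj_iff.2 h), fun i hi => ?_⟩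
  rw [colorsUsed_comp_of_surjective f.surjective] at hi ⊢
  obtain ⟨v, hv, hdom⟩ := hc.2 i hi
  refine ⟨f.symm v, by simpa using hv, fun j hj => ?_⟩
  obtain ⟨u, hu, huj⟩ := hdom j hj
  refine ⟨f.symm u, ?_, by simpa using huj⟩
  rcases hu with rfl | hvu
  · exact Or.inl rfl
  · exact Or.inr (f.symm.map_adj_iff.2 hvu)

theorem bChromaticNumber_congr (f : G ≃g H) : bChromaticNumber G = bChromaticNumber H := by
  rw [bChromaticNumber_eq_sSup, bChromaticNumber_eq_sSup]
  congr 1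
  ext k
  constructor
  · rintro ⟨c, hc, rfl⟩
    exact ⟨c ∘ f.symm, hc.comp_iso f.symm,
      congrArg Finset.card (colorsUsed_comp_of_surjective f.symm.surjective c)⟩
  · rintro ⟨c, hc, rfl⟩
    exact ⟨c ∘ f, hc.comp_iso f,
      congrArg Finset.card (colorsUsed_comp_of_surjective f.surjective c)⟩

end Invariance

theorem Finset.card_image_univ_le_one {ι γ : Type*} [Fintype ι] [DecidableEq γ] {f : ι → γ}
    (hf : ∀ x y, f x = f y) : (Finset.univ.image f).card ≤ 1 :=
  Finset.card_le_one.2 <| by simpa using hf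

section CompleteBipartite

variable {α β : Type*}

def completeBipartiteGraphSwap (α β : Type*) :
    completeBipartiteGraph β α ≃g completeBipartiteGraph α β where
  __ := Equiv.sumComm β α
  map_rel_iff' := by rintro (a | a) (b | b) <;> simp

theorem isStarColoring_completeBipartiteGraph_iff {c : α ⊕ β → ℕ} :
    IsStarColoring (completeBipartiteGraph α β) c ↔
      (∀ a b, c (inl a) ≠ c (inr b)) ∧ (Injective (c ∘ inl) ∨ Injective (c ∘ inr)) := by
  constructor
  · rintro ⟨hproper, hstar⟩
    refine ⟨fun a b => hproper (by simp), ?_⟩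
    by_contra! h
    simp only [Injective, comp_apply, not_forall] at h
    obtain ⟨⟨a, a', ha, hne⟩, ⟨b, b', hb, hne'⟩⟩ := h
    exact hstar (inl a) (inr b) (inl a') (inr b') (by simp) (by simp) (by simp)
      (by simpa using hne) (by simpa using hne') (by simp) ⟨ha, hb⟩
  · rintro ⟨hcross, hinj⟩
    refine ⟨?_, ?_⟩
    · rintro (a | a) (b | b) h <;> simp at h
      · exact hcross a b
      · exact (hcross b a).symm
    · rintro (a | a) (b | b) (x | x) (y | y) hab hbx hxy hax hby - ⟨hax', hby'⟩ <;>
        simp at hab hbx hxy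
      · rcases hinj with h | h
        · exact hax (congrArg inl (h hax'))
        · exact hby (congrArg inr (h hby'))
      · rcases hinj with h | h
        · exact hby (congrArg inl (h hby'))
        · exact hax (congrArg inr (h hax'))

variable [Fintype α] [Fintype β]

theorem colorsUsed_sum (c : α ⊕ β → ℕ) :
    colorsUsed c = Finset.univ.image (c ∘ inl) ∪ Finset.univ.image (c ∘ inr) := by
  ext j
  simp [mem_colorsUsed]

theorem exists_starRecolorStep_of_injective_inr {c : α ⊕ β → ℕ}
    (hc : IsStarColoring (completeBipartiteGraph α β) c) (hinj : Injective (c ∘ inr)) {a a' : α}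
    (hne : c (inl a) ≠ c (inl a')) : ∃ c', StarRecolorStep (completeBipartiteGraph α β) c' c := by
  obtain ⟨hcross, -⟩ := isStarColoring_completeBipartiteGraph_iff.1 hc
  let c' : α ⊕ β → ℕ := fun v => if c v = c (inl a) then c (inl a') else c v
  have hc'_inl : ∀ x, ∃ x', c' (inl x) = c (inl x') := fun x => by
    by_cases hx : c (inl x) = c (inl a)
    · exact ⟨a', if_pos hx⟩
    · exact ⟨x, if_neg hx⟩
  have hc'_inr : ∀ y, c' (inr y) = c (inr y) := fun y => if_neg (hcross a y).symm
  have hstar : IsStarColoring (completeBipartiteGraph α β) c' := by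
    refine isStarColoring_completeBipartiteGraph_iff.2 ⟨fun x y => ?_, Or.inr ?_⟩
    · obtain ⟨x', hx'⟩ := hc'_inl x
      rw [hx', hc'_inr]
      exact hcross x' y
    · simpa [comp_def, hc'_inr] using hinj
  refine ⟨c', hc, hstar, c (inl a), mem_colorsUsed.2 ⟨_, rfl⟩, fun v hv => if_neg hv,
    fun v hv => ?_⟩
  simp only [c', if_pos hv]
  exact ⟨hne.symm, mem_colorsUsed.2 ⟨_, rfl⟩⟩

theorem IsStarBColoring.card_colorsUsed_le_of_injective_inr {c : α ⊕ β → ℕ}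
    (hc : IsStarBColoring (completeBipartiteGraph α β) c) (hinj : Injective (c ∘ inr)) :
    (colorsUsed c).card ≤ Fintype.card β + 1 := by
  have hleft : (Finset.univ.image (c ∘ inl)).card ≤ 1 := by
    refine Finset.card_image_univ_le_one fun a a' => ?_
    by_contra hne
    obtain ⟨c', hstep⟩ := exists_starRecolorStep_of_injective_inr hc.1 hinj hne
    exact hc.2 c' hstep
  calc (colorsUsed c).card
      ≤ (Finset.univ.image (c ∘ inl)).card + (Finset.univ.image (c ∘ inr)).card := by
        rw [colorsUsed_sum]
        exact Finset.card_union_le _ _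
    _ ≤ 1 + Fintype.card β := add_le_add hleft Finset.card_image_le
    _ = Fintype.card β + 1 := add_comm _ _

theorem IsStarBColoring.card_colorsUsed_le {c : α ⊕ β → ℕ}
    (hc : IsStarBColoring (completeBipartiteGraph α β) c) :
    (colorsUsed c).card ≤ max (Fintype.card α) (Fintype.card β) + 1 := by
  rcases (isStarColoring_completeBipartiteGraph_iff.1 hc.1).2 with hinj | hinj
  · have := (hc.comp_iso (completeBipartiteGraphSwap α β)).card_colorsUsed_le_of_injective_inr hinj
    rw [colorsUsed_comp_of_surjective (RelIso.surjective _)] at this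
    omega
  · exact (hc.card_colorsUsed_le_of_injective_inr hinj).trans (by omega)

theorem IsBColoring.apply_inl_eq {c : α ⊕ β → ℕ}
    (hc : IsBColoring (completeBipartiteGraph α β) c) (a a' : α) : c (inl a) = c (inl a') := by
  obtain ⟨v, hv, hdom⟩ := hc.2 (c (inl a)) (mem_colorsUsed.2 ⟨_, rfl⟩)
  obtain ⟨u, hu, hu_color⟩ := hdom (c (inl a')) (mem_colorsUsed.2 ⟨_, rfl⟩)
  rcases v with x | y
  · rcases hu with rfl | hadj
    · exact hv.symm.trans hu_color
    · rcases u with x' | y'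
      · simp at hadj
      · exact absurd hu_color (hc.1 (by simp : (completeBipartiteGraph α β).Adj (inr y') (inl a')))
  · exact absurd hv (hc.1 (by simp : (completeBipartiteGraph α β).Adj (inr y) (inl a)))

theorem IsBColoring.card_colorsUsed_le_two {c : α ⊕ β → ℕ}
    (hc : IsBColoring (completeBipartiteGraph α β) c) : (colorsUsed c).card ≤ 2 := by
  have hleft := Finset.card_image_univ_le_one hc.apply_inl_eq
  have hright := Finset.card_image_univ_le_one
    (hc.comp_iso (completeBipartiteGraphSwap α β)).apply_inl_eq
  rw [colorsUsed_sum]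
  exact (Finset.card_union_le _ _).trans (add_le_add hleft hright)

theorem isBColoring_elim_zero_one :
    IsBColoring (completeBipartiteGraph α β) (Sum.elim (fun _ => 0) fun _ => 1) := by
  refine ⟨by rintro (a | a) (b | b) h <;> simp at h ⊢, fun i hi => ?_⟩
  obtain ⟨v, rfl⟩ := mem_colorsUsed.1 hi
  refine ⟨v, rfl, fun j hj => ?_⟩
  obtain ⟨u, rfl⟩ := mem_colorsUsed.1 hj
  rcases v with a | b <;> rcases u with a' | b'
  exacts [⟨inl a, Or.inl rfl, rfl⟩, ⟨inr b', Or.inr (by simp), rfl⟩,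
    ⟨inl a', Or.inr (by simp), rfl⟩, ⟨inr b, Or.inl rfl, rfl⟩]

theorem bChromaticNumber_completeBipartiteGraph [Nonempty α] [Nonempty β] :
    bChromaticNumber (completeBipartiteGraph α β) = 2 := by
  have hused : colorsUsed (Sum.elim (fun _ : α => 0) fun _ : β => 1) = {0, 1} := by
    ext j
    simp [mem_colorsUsed, eq_comm]
  rw [bChromaticNumber_eq_sSup]
  refine IsGreatest.csSup_eq ⟨⟨_, isBColoring_elim_zero_one, by rw [hused]; rfl⟩, ?_⟩
  rintro k ⟨c, hc, rfl⟩
  exact hc.card_colorsUsed_le_two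

theorem isStarBColoring_elim_const_val {n : ℕ} (hn : n ≤ Fintype.card α) :
    IsStarBColoring (completeBipartiteGraph α (Fin n)) (Sum.elim (fun _ => n) Fin.val) := by
  have hc : IsStarColoring (completeBipartiteGraph α (Fin n)) (Sum.elim (fun _ => n) Fin.val) :=
    isStarColoring_completeBipartiteGraph_iff.2 ⟨fun _ b => b.isLt.ne', Or.inr Fin.val_injective⟩
  refine ⟨hc, ?_⟩
  rintro c' ⟨-, hc', i, hi, hkeep, hmove⟩
  obtain ⟨hcross', hinj'⟩ := isStarColoring_completeBipartiteGraph_iff.1 hc'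
  obtain ⟨v, rfl⟩ := mem_colorsUsed.1 hi
  obtain ⟨hne, hmem⟩ := hmove v rfl
  obtain ⟨w, hw⟩ := mem_colorsUsed.1 hmem
  rcases v with a | b <;> rcases w with a' | b' <;>
    simp only [Sum.elim_inl, Sum.elim_inr] at hkeep hne hw
  · exact hne hw.symm
  · have := hkeep (inr b') (by simpa using b'.isLt.ne)
    exact hcross' a b' (by simpa [← hw] using this.symm)
  · have := hkeep (inl a') (by simpa using b.isLt.ne')
    exact hcross' a' b (by simpa [← hw] using this)
  · -- both sides now carry a repeated color
    have hbb' : b ≠ b' := fun h => hne (by rw [← hw, h])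
    have hb' : c' (inr b') = b' := hkeep (inr b') (by simpa [Fin.val_inj] using hbb'.symm)
    have hleft : ∀ x, c' (inl x) = n := fun x => hkeep (inl x) (by simpa using b.isLt.ne')
    have hn2 : 2 ≤ n := by
      have := b.isLt; have := b'.isLt; have := Fin.val_ne_of_ne hbb'; omega
    obtain ⟨x, x', hxx'⟩ := (Fintype.one_lt_card_iff (α := α)).1 (by omega)
    rcases hinj' with h | h
    · exact hxx' (h (by simp [hleft]))
    · exact hbb' (h (by simp [hb', hw]))

theorem colorsUsed_elim_const_val [Nonempty α] (n : ℕ) :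
    colorsUsed (Sum.elim (fun _ : α => n) (Fin.val : Fin n → ℕ)) = Finset.range (n + 1) := by
  ext j
  simp only [mem_colorsUsed, Sum.exists, Sum.elim_inl, Sum.elim_inr, exists_const,
    Finset.mem_range, Nat.lt_succ_iff]
  refine ⟨by rintro (rfl | ⟨b, rfl⟩) <;> omega, fun hj => ?_⟩
  rcases hj.eq_or_lt with rfl | hj
  exacts [Or.inl rfl, Or.inr ⟨⟨j, hj⟩, rfl⟩]

theorem starBChromaticNumber_completeBipartiteGraph_fin {n : ℕ} (hn : 1 ≤ n) :
    starBChromaticNumber (completeBipartiteGraph (Fin n) (Fin n)) = n + 1 := by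
  have : Nonempty (Fin n) := ⟨⟨0, hn⟩⟩
  refine IsGreatest.csSup_eq ⟨⟨_, isStarBColoring_elim_const_val (by simp),
    by rw [colorsUsed_elim_const_val, Finset.card_range]⟩, ?_⟩
  rintro k ⟨c, hc, rfl⟩
  simpa using hc.card_colorsUsed_le

end CompleteBipartite

/-- **Corollary.** The difference `Sᵦ(G) − φ(G)` between the star b-chromatic number and
the b-chromatic number is unbounded: the complete bipartite graph `K_{n,n}` satisfies
`φ(K_{n,n}) = 2` and `Sᵦ(K_{n,n}) = n + 1` for every `n ≥ 1`, and hence for every natural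
number `M` there is a finite simple graph `G` with `Sᵦ(G) − φ(G) > M`. -/
theorem starB_sub_bChromatic_unbounded :
    (∀ n : ℕ, 1 ≤ n →
      bChromaticNumber (completeBipartiteGraph (Fin n) (Fin n)) = 2 ∧
      starBChromaticNumber (completeBipartiteGraph (Fin n) (Fin n)) = n + 1) ∧
    ∀ M : ℕ, ∃ (m : ℕ) (G : SimpleGraph (Fin m)),
      bChromaticNumber G + M < starBChromaticNumber G := by
  refine ⟨fun n hn => ?_, fun M => ?_⟩
  · have : Nonempty (Fin n) := ⟨⟨0, hn⟩⟩
    exact ⟨bChromaticNumber_completeBipartiteGraph,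
      starBChromaticNumber_completeBipartiteGraph_fin hn⟩
  · have hcard : Fintype.card (Fin (M + 2) ⊕ Fin (M + 2)) = (M + 2) + (M + 2) := by simp
    let f := (completeBipartiteGraph (Fin (M + 2)) (Fin (M + 2))).overFinIso hcard
    refine ⟨_, (completeBipartiteGraph (Fin (M + 2)) (Fin (M + 2))).overFin hcard, ?_⟩
    rw [← bChromaticNumber_congr f, ← starBChromaticNumber_congr f,
      bChromaticNumber_completeBipartiteGraph,
      starBChromaticNumber_completeBipartiteGraph_fin (by omega)]
    omega
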